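/- Let n ≥ 1 be a natural number and κ ∈ [0,1]. If p ≥ (1 + κ^n)^(-1/n) and p ≤ 1, then for every integer l with 0 ≤ l ≤ n, -κ^l · p^(n-l) + 1 - p^(n-l) ≤ 1 - (1 + κ^n)·p^n ≤ 0. -/
import Mathlib


theorem zero_coherent_info_bound (n : ℕ) (hn : 1 ≤ n) (κ p : ℝ)
    (hκ0 : 0 ≤ κ) (hκ1 : κ ≤ 1)
    (hp : (1 + κ ^ n) ^ (-(1:ℝ)/n) ≤ p) (hp1 : p ≤ 1)
    (l : ℕ) (hl : l ≤ n) :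
    -κ ^ l * p ^ (n - l) + 1 - p ^ (n - l) ≤ 1 - (1 + κ ^ n) * p ^ n ∧
      1 - (1 + κ ^ n) * p ^ n ≤ 0 := by
  have hκn : (0:ℝ) ≤ κ ^ n := pow_nonneg hκ0 n
  have ha : (0:ℝ) < 1 + κ ^ n := by linarith
  have hp0 : 0 ≤ p :=
    le_trans (Real.rpow_nonneg ha.le _) hp
  have hne : (n:ℝ) ≠ 0 := by exact_mod_cast (Nat.pos_of_ne_zero (by omega)).ne'
  -- key: (1+κ^n) * p^n ≥ 1
  have key : 1 ≤ (1 + κ ^ n) * p ^ n := by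
    have h1 : ((1 + κ ^ n) ^ (-(1:ℝ)/n)) ^ n ≤ p ^ n :=
      pow_le_pow_left₀ (Real.rpow_nonneg ha.le _) hp n
    have h2 : ((1 + κ ^ n) ^ (-(1:ℝ)/n)) ^ n = (1 + κ ^ n) ^ (-(1:ℝ)) := by
      rw [← Real.rpow_natCast ((1 + κ ^ n) ^ (-(1:ℝ)/n)) n, ← Real.rpow_mul ha.le]
      congr 1
      field_simp
    rw [h2] at h1
    have h3 : (1 + κ ^ n) * (1 + κ ^ n) ^ (-(1:ℝ)) = 1 := by
      rw [Real.rpow_neg_one]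
      field_simp
    calc (1:ℝ) = (1 + κ ^ n) * (1 + κ ^ n) ^ (-(1:ℝ)) := h3.symm
      _ ≤ (1 + κ ^ n) * p ^ n := by
          exact mul_le_mul_of_nonneg_left h1 ha.le
  refine ⟨?_, by linarith⟩
  -- first inequality:  (1+κ^n) p^n ≤ (1+κ^l) p^{n-l}
  have hpn : p ^ n = p ^ (n - l) * p ^ l := by
    rw [← pow_add]; congr 1; omega
  have hκl : κ ^ n ≤ κ ^ l := pow_le_pow_of_le_one hκ0 hκ1 hl
  have hpl : p ^ l ≤ 1 := pow_le_one₀ hp0 hp1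
  have hplnn : (0:ℝ) ≤ p ^ (n - l) := pow_nonneg hp0 _
  have hstep : (1 + κ ^ n) * p ^ l ≤ 1 + κ ^ l := by
    calc (1 + κ ^ n) * p ^ l ≤ (1 + κ ^ n) * 1 := by
          exact mul_le_mul_of_nonneg_left hpl ha.le
      _ = 1 + κ ^ n := mul_one _
      _ ≤ 1 + κ ^ l := by linarith
  have : (1 + κ ^ n) * p ^ n ≤ (1 + κ ^ l) * p ^ (n - l) := by
    rw [hpn]
    calc (1 + κ ^ n) * (p ^ (n - l) * p ^ l)
        = ((1 + κ ^ n) * p ^ l) * p ^ (n - l) := by ring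
      _ ≤ (1 + κ ^ l) * p ^ (n - l) := mul_le_mul_of_nonneg_right hstep hplnn
  nlinarith [this]
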